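/- Let P be an n×n complex Hermitian idempotent matrix (Pᴴ = P, P·P = P), let M be an n×k complex matrix, and let G be a k×m complex matrix such that P·(M·G) = M·G. Then Re tr(Mᴴ·P·M) · Re tr(G·Gᴴ) ≥ Re tr(M·G·Gᴴ·Mᴴ); that is, the trace of the projected quadratic form, scaled by tr(G Gᴴ), upper-bounds the trace tr(M G Gᴴ Mᴴ). -/

import Mathlib

/-!
Since `P` fixes the columns of `M * G`, we have `M * G = (P * M) * G`, so by submultiplicativity
of the Frobenius norm `‖M * G‖² ≤ ‖P * M‖² ‖G‖²`. Both sides are traces of Gram matrices, and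
`‖P * M‖² = tr (Mᴴ Pᴴ P M) = tr (Mᴴ P M)` because `P` is an orthogonal projection.
-/

open Matrix

attribute [local instance] Matrix.frobeniusNormedAddCommGroup

namespace Matrix

variable {𝕜 l m n : Type*} [RCLike 𝕜] [Fintype m]

theorem re_trace_mul_conjTranspose_self_eq_frobenius_norm_sq [Fintype n] (A : Matrix m n 𝕜) :
    RCLike.re (A * Aᴴ).trace = ‖A‖ ^ 2 := by
  have hsum : 0 ≤ ∑ i, ∑ j, ‖A i j‖ ^ (2 : ℝ) := by positivity
  rw [frobenius_norm_def, ← Real.rpow_natCast, ← Real.rpow_mul hsum]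
  simp only [trace, diag_apply, mul_apply, conjTranspose_apply, RCLike.star_def, RCLike.mul_conj,
    ← RCLike.ofReal_pow, ← RCLike.ofReal_sum, RCLike.ofReal_re, Real.rpow_two]
  norm_num

theorem re_trace_mul_mul_conjTranspose_le [Fintype l] [Fintype n] (A : Matrix l m 𝕜)
    (B : Matrix m n 𝕜) :
    RCLike.re ((A * B) * (A * B)ᴴ).trace ≤
      RCLike.re (A * Aᴴ).trace * RCLike.re (B * Bᴴ).trace := by
  simp only [re_trace_mul_conjTranspose_self_eq_frobenius_norm_sq, ← mul_pow]
  exact pow_le_pow_left₀ (norm_nonneg _) (frobenius_norm_mul A B) 2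

theorem conjTranspose_mul_mul_self_of_projection {P : Matrix m m 𝕜} (hP : Pᴴ = P)
    (hPP : P * P = P) (M : Matrix m n 𝕜) : (P * M)ᴴ * (P * M) = Mᴴ * P * M := by
  rw [conjTranspose_mul, hP, Matrix.mul_assoc, ← Matrix.mul_assoc P, hPP, Matrix.mul_assoc]

end Matrix

theorem proj_trace_lower_bound {n k m : ℕ}
    (P : Matrix (Fin n) (Fin n) ℂ) (M : Matrix (Fin n) (Fin k) ℂ)
    (G : Matrix (Fin k) (Fin m) ℂ)
    (hherm : P.conjTranspose = P) (hidem : P * P = P)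
    (hfix : P * (M * G) = M * G) :
    (M * G * G.conjTranspose * M.conjTranspose).trace.re ≤
      (M.conjTranspose * P * M).trace.re * (G * G.conjTranspose).trace.re := by
  have hgram : M * G * Gᴴ * Mᴴ = ((P * M) * G) * ((P * M) * G)ᴴ := by
    rw [Matrix.mul_assoc P, hfix, conjTranspose_mul, Matrix.mul_assoc, Matrix.mul_assoc]
  have hproj : (Mᴴ * P * M).trace = ((P * M) * (P * M)ᴴ).trace := by
    rw [← conjTranspose_mul_mul_self_of_projection hherm hidem, trace_mul_comm]
  rw [hgram, hproj]
  exact re_trace_mul_mul_conjTranspose_le (P * M) G
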